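/- Let a, b, k be positive integers with b > 1 and k odd. Define S(a,b) := Σ_{m,n ≥ 0, 2bn + 2m = ab − a} (−1)^n · binom(a, n) · binom(a−1+m, m) + 2 · Σ_{m,n ≥ 0, r ≥ 1, 2bn + 2m + rk = ab − a} (−1)^n · binom(a, n) · binom(a−1+m, m). Then Σ_{0 < n < k/2} sin^a(2πbn/k) / sin^a(2πn/k) = −b^a/2 + (k/2) · S(a,b). -/

import Mathlib

/-!
With `w = exp (i x)` one has `sin (b x) / sin x = w^{-(b-1)} (1 + w^2 + ⋯ + w^{2(b-1)})`, so the
`a`-th power is `∑_c N_c w^{2c-d}`, where `d = a(b-1)` and `N_c` are the coefficients of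
`(1 + X + ⋯ + X^{b-1})^a`. Summing over all `k`-th roots of unity `w = ζ^n` keeps exactly the `c`
with `k ∣ 2c - d`; on the trigonometric side the terms `n` and `k - n` agree and `n = 0` gives
`b^a`. Since `N` is palindromic, `N_c = N_{d-c}`, the kept `c` fold onto `2c = d - rk` with
`r ≥ 0`, and expanding `(1 - X^b)^a (1 - X)^{-a}` gives
`N_c = ∑_{bn + m = c} (-1)^n binom(a,n) binom(a-1+m,m)`, which turns the folded sum into `S(a,b)`.
-/

/-- `S(a,b)` of the paper (depending also on `k`): the sum over `m,n ≥ 0` with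
`2bn + 2m = ab - a` of `(-1)^n binom(a,n) binom(a-1+m,m)`, plus twice the sum
over `m,n ≥ 0`, `r ≥ 1` with `2bn + 2m + rk = ab - a` of the same summand. -/
noncomputable def Sab (k a b : ℕ) : ℝ :=
  (∑ t ∈ (Finset.range (a * b + 1) ×ˢ Finset.range (a * b + 1)).filter
      (fun t => 2 * b * t.2 + 2 * t.1 = a * b - a),
    (-1 : ℝ) ^ t.2 * (a.choose t.2) * ((a - 1 + t.1).choose t.1)) +
  2 * ∑ t ∈ (Finset.range (a * b + 1) ×ˢ Finset.range (a * b + 1) ×ˢ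
      Finset.Icc 1 (a * b)).filter
      (fun t => 2 * b * t.2.1 + 2 * t.1 + t.2.2 * k = a * b - a),
    (-1 : ℝ) ^ t.2.1 * (a.choose t.2.1) * ((a - 1 + t.1).choose t.1)

open Finset Polynomial Real

noncomputable def geomPoly (R : Type*) [Semiring R] (b : ℕ) : R[X] := ∑ j ∈ range b, X ^ j

section Semiring

variable {R : Type*} [Semiring R]

theorem eval_geomPoly (b : ℕ) (x : R) : (geomPoly R b).eval x = ∑ j ∈ range b, x ^ j := by
  simp [geomPoly, eval_finsetSum, eval_X_pow]

theorem natDegree_geomPoly_le (b : ℕ) : (geomPoly R b).natDegree ≤ b - 1 :=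
  natDegree_sum_le_of_forall_le _ _ fun j hj =>
    (natDegree_X_pow_le j).trans (by have := mem_range.1 hj; omega)

theorem natDegree_geomPoly_pow_le (a b : ℕ) : (geomPoly R b ^ a).natDegree ≤ a * (b - 1) :=
  natDegree_pow_le.trans (Nat.mul_le_mul_left a (natDegree_geomPoly_le b))

theorem reflect_geomPoly (b : ℕ) : reflect (b - 1) (geomPoly R b) = geomPoly R b := by
  ext i
  simp only [coeff_reflect, geomPoly, finsetSum_coeff, coeff_X_pow, sum_ite_eq, mem_range]
  rcases le_or_gt i (b - 1) with h | h
  · rw [revAt_le h]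
    exact if_congr (by omega) rfl rfl
  · rw [revAt_eq_self_of_lt h]

theorem reflect_geomPoly_pow (a b : ℕ) :
    reflect (a * (b - 1)) (geomPoly R b ^ a) = geomPoly R b ^ a := by
  induction a with
  | zero => simp
  | succ a ih =>
    rw [pow_succ, add_mul, one_mul, reflect_mul _ _ (natDegree_geomPoly_pow_le a b)
      (natDegree_geomPoly_le b), ih, reflect_geomPoly]

theorem coeff_geomPoly_pow_sub (a b : ℕ) {c : ℕ} (hc : c ≤ a * (b - 1)) :
    (geomPoly R b ^ a).coeff (a * (b - 1) - c) = (geomPoly R b ^ a).coeff c := by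
  conv_rhs => rw [← reflect_geomPoly_pow, coeff_reflect, revAt_le hc]

end Semiring

theorem sum_range_ite_add_eq {M : Type*} [AddCommMonoid M] (f : ℕ → M) {i c L : ℕ}
    (hcL : c < L) :
    ∑ m ∈ range L, (if i + m = c then f m else 0) = if i ≤ c then f (c - i) else 0 := by
  split_ifs with h
  · rw [sum_congr rfl fun m _ => if_congr (by omega : i + m = c ↔ c - i = m) rfl rfl,
      sum_ite_eq, if_pos (mem_range.2 (by omega))]
  · exact sum_eq_zero fun m _ => if_neg (by omega)

theorem PowerSeries.coe_geomPoly_pow {R : Type*} [CommRing R] (a b : ℕ) (ha : 0 < a) :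
    ((geomPoly R b ^ a : R[X]) : PowerSeries R) =
      (1 - PowerSeries.X ^ b) ^ a * PowerSeries.mk fun m => ((a - 1 + m).choose m : R) := by
  obtain ⟨e, rfl⟩ : ∃ e, a = e + 1 := ⟨a - 1, by omega⟩
  have hgeom : ((geomPoly R b : R[X]) : PowerSeries R) * (1 - PowerSeries.X) =
      1 - PowerSeries.X ^ b := by
    have := congrArg (fun p : R[X] => (p : PowerSeries R))
      (mul_neg_geom_sum (Polynomial.X : R[X]) b)
    simpa [geomPoly, mul_comm] using this
  have hinv := PowerSeries.mk_add_choose_mul_one_sub_pow_eq_one (S := R) (d := e)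
  simp only [Nat.add_sub_cancel, ← Nat.choose_symm_add]
  rw [Polynomial.coe_pow, ← hgeom, mul_pow, mul_assoc, mul_comm _ (PowerSeries.mk _), hinv,
    mul_one]

theorem PowerSeries.one_sub_X_pow_pow_eq_sum {R : Type*} [CommRing R] (a b : ℕ) {L : ℕ}
    (haL : a < L) :
    (1 - PowerSeries.X ^ b : PowerSeries R) ^ a =
      ∑ n ∈ range L, PowerSeries.C ((-1) ^ n * (a.choose n : R)) * PowerSeries.X ^ (b * n) := by
  rw [sub_eq_neg_add, add_pow, ← sum_subset (range_subset_range.2 (by omega : a + 1 ≤ L))]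
  · refine sum_congr rfl fun n _ => ?_
    rw [one_pow, mul_one, neg_pow, ← pow_mul, mul_comm b]
    simp only [map_mul, map_pow, map_neg, map_one, map_natCast]
    ring
  · intro n _ hn
    simp [Nat.choose_eq_zero_of_lt (by simpa using hn : a < n)]

theorem coeff_geomPoly_pow {R : Type*} [CommRing R] {a : ℕ} (ha : 0 < a) (b : ℕ) {c L : ℕ}
    (haL : a < L) (hcL : c < L) :
    (geomPoly R b ^ a).coeff c = ∑ t ∈ range L ×ˢ range L with b * t.2 + t.1 = c,
      (-1) ^ t.2 * (a.choose t.2 : R) * ((a - 1 + t.1).choose t.1 : R) := by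
  rw [← Polynomial.coeff_coe, PowerSeries.coe_geomPoly_pow a b ha,
    PowerSeries.one_sub_X_pow_pow_eq_sum a b haL, sum_mul, map_sum, sum_filter, sum_product_right]
  refine sum_congr rfl fun n _ => ?_
  dsimp only
  rw [mul_assoc, PowerSeries.coeff_C_mul, PowerSeries.coeff_X_pow_mul', sum_range_ite_add_eq _ hcL]
  split_ifs <;> simp

noncomputable def sinRatio {K : Type*} [Field K] (b : ℕ) (w : K) : K :=
  w⁻¹ ^ (b - 1) * (geomPoly K b).eval (w ^ 2)

theorem sinRatio_pow_eq_sum {K : Type*} [Field K] (a b : ℕ) (w : K) :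
    sinRatio b w ^ a = ∑ c ∈ range (a * (b - 1) + 1),
      (geomPoly K b ^ a).coeff c * (w⁻¹ ^ (a * (b - 1)) * w ^ (2 * c)) := by
  rw [sinRatio, mul_pow, ← eval_pow,
    eval_eq_sum_range' (Nat.lt_succ_of_le (natDegree_geomPoly_pow_le a b)), mul_sum, ← pow_mul,
    mul_comm (b - 1)]
  refine sum_congr rfl fun c _ => ?_
  ring

theorem IsPrimitiveRoot.sum_pow_eq_ite {K : Type*} [Field K] {ζ : K} {k : ℕ}
    (hζ : IsPrimitiveRoot ζ k) (t : ℤ) :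
    ∑ n ∈ range k, (ζ ^ t) ^ n = if (k : ℤ) ∣ t then (k : K) else 0 := by
  split_ifs with h
  · simp [(hζ.zpow_eq_one_iff_dvd t).2 h]
  · have hne : ζ ^ t ≠ 1 := fun h' => h ((hζ.zpow_eq_one_iff_dvd t).1 h')
    have hk : (ζ ^ t) ^ k = 1 := by
      rw [← zpow_natCast, ← zpow_mul, mul_comm, zpow_mul, zpow_natCast, hζ.pow_eq_one,
        one_zpow]
    rw [geom_sum_eq hne, hk, sub_self, zero_div]

theorem IsPrimitiveRoot.sum_sinRatio_pow {K : Type*} [Field K] {ζ : K} {k : ℕ}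
    (hζ : IsPrimitiveRoot ζ k) (a b : ℕ) :
    ∑ n ∈ range k, sinRatio b (ζ ^ n) ^ a = k * ∑ c ∈ (range (a * (b - 1) + 1)).filter
      (fun c : ℕ => (k : ℤ) ∣ 2 * c - (a * (b - 1) : ℕ)), (geomPoly K b ^ a).coeff c := by
  rcases Nat.eq_zero_or_pos k with rfl | hk
  · simp
  have hζ0 : ζ ≠ 0 := hζ.ne_zero hk.ne'
  simp_rw [sinRatio_pow_eq_sum]
  rw [sum_comm, sum_filter, mul_sum]
  refine sum_congr rfl fun c _ => ?_
  have hterm : ∀ n : ℕ, (ζ ^ n)⁻¹ ^ (a * (b - 1)) * (ζ ^ n) ^ (2 * c)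
      = (ζ ^ (2 * c - (a * (b - 1) : ℕ) : ℤ)) ^ n := fun n => by
    rw [zpow_sub₀ hζ0, zpow_mul, zpow_ofNat, zpow_natCast, zpow_natCast]
    field_simp
    ring
  simp_rw [← mul_sum, hterm, hζ.sum_pow_eq_ite]
  split_ifs <;> ring

theorem Complex.sin_nat_mul_eq (x : ℂ) (b : ℕ) :
    Complex.sin (b * x) = Complex.sin x * sinRatio b (Complex.exp (x * Complex.I)) := by
  rw [sinRatio, eval_geomPoly]
  rcases b with _ | m
  · simp
  set w := Complex.exp (x * Complex.I)
  have hw : w⁻¹ * w = 1 := inv_mul_cancel₀ (Complex.exp_ne_zero _)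
  have hexp : ∀ n : ℕ, Complex.exp (n * x * Complex.I) = w ^ n := fun n => by
    rw [← Complex.exp_nat_mul]; ring_nf
  have hexp_neg : ∀ n : ℕ, Complex.exp (-(n * x) * Complex.I) = w⁻¹ ^ n := fun n => by
    rw [inv_pow, ← hexp, ← Complex.exp_neg]; ring_nf
  have hgeom := geom_sum_mul (w ^ 2) (m + 1)
  have hpow : w⁻¹ ^ (m + 1) * w ^ (m + 1) = 1 := by rw [← mul_pow, hw, one_pow]
  simp only [Complex.sin, Nat.add_sub_cancel]
  rw [hexp_neg, hexp, show -x * Complex.I = -((1 : ℕ) * x) * Complex.I by simp,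
    show x * Complex.I = (1 : ℕ) * x * Complex.I by simp, hexp_neg, hexp]
  linear_combination (Complex.I / 2) * (w⁻¹ ^ (m + 1) * hgeom + w ^ (m + 1) * hpow
    - w * w⁻¹ ^ m * (∑ j ∈ range (m + 1), (w ^ 2) ^ j) * hw)

theorem Complex.sin_pow_div_sin_pow_eq (a b : ℕ) {x : ℝ} (hx : Real.sin x ≠ 0) :
    ((Real.sin (b * x) ^ a / Real.sin x ^ a : ℝ) : ℂ) =
      sinRatio b (Complex.exp (x * Complex.I)) ^ a := by
  have hx' : Complex.sin x ≠ 0 := by exact_mod_cast hx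
  push_cast
  rw [Complex.sin_nat_mul_eq, mul_pow, mul_div_cancel_left₀ _ (pow_ne_zero a hx')]

theorem Real.sin_two_pi_mul_div_ne_zero {k n : ℕ} (hk : Odd k) (hn : 0 < n) (hnk : n < k) :
    Real.sin (2 * π * n / k) ≠ 0 := by
  rw [Real.sin_ne_zero_iff]
  intro m hm
  have hk0 : (k : ℝ) ≠ 0 := by exact_mod_cast hk.pos.ne'
  have hmk : (m * k : ℤ) = 2 * n := by
    have : (m : ℝ) * k = 2 * n := by
      rw [eq_div_iff hk0] at hm
      exact mul_left_cancel₀ pi_ne_zero (by linear_combination hm)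
    exact_mod_cast this
  have hdvd : k ∣ 2 * n := by exact_mod_cast Dvd.intro_left _ hmk
  have := (Nat.Coprime.dvd_of_dvd_mul_left (Nat.coprime_two_right.2 hk) hdvd)
  exact absurd (Nat.le_of_dvd hn this) (by omega)

theorem sin_pow_div_sin_pow_reflect (a b : ℕ) {k n : ℕ} (hk : k ≠ 0) (hn : n ≤ k) :
    Real.sin (2 * π * b * (k - n : ℕ) / k) ^ a / Real.sin (2 * π * (k - n : ℕ) / k) ^ a
      = Real.sin (2 * π * b * n / k) ^ a / Real.sin (2 * π * n / k) ^ a := by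
  have hk0 : (k : ℝ) ≠ 0 := by exact_mod_cast hk
  have hnum : 2 * π * b * (k - n : ℕ) / k = b * (2 * π) - 2 * π * b * n / k := by
    push_cast [Nat.cast_sub hn]; field_simp
  have hden : 2 * π * (k - n : ℕ) / k = 2 * π - 2 * π * n / k := by
    push_cast [Nat.cast_sub hn]; field_simp
  rw [hnum, hden, Real.sin_nat_mul_two_pi_sub, Real.sin_two_pi_sub, ← div_pow,
    ← div_pow, neg_div_neg_eq]

theorem sum_Ico_one_eq_two_nsmul_sum_Icc_of_odd {M : Type*} [AddCommMonoid M] (f : ℕ → M)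
    {k : ℕ} (hk : Odd k) (hf : ∀ n ≤ k, f (k - n) = f n) :
    ∑ n ∈ Ico 1 k, f n = 2 • ∑ n ∈ Icc 1 ((k - 1) / 2), f n := by
  obtain ⟨h, rfl⟩ := hk
  have hreflect : ∑ n ∈ Ico (h + 1) (2 * h + 1), f n = ∑ n ∈ Ico 1 (h + 1), f n := by
    have := sum_Ico_reflect f 1 (show h + 1 ≤ 2 * h + 1 + 1 by omega)
    rw [show 2 * h + 1 + 1 - (h + 1) = h + 1 by omega, Nat.add_sub_cancel] at this
    rw [← this]
    exact sum_congr rfl fun n hn => hf n (by simp at hn; omega)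
  rw [show (2 * h + 1 - 1) / 2 = h by omega, ← Ico_add_one_right_eq_Icc,
    ← sum_Ico_consecutive f (by omega : 1 ≤ h + 1) (by omega : h + 1 ≤ 2 * h + 1),
    hreflect, two_nsmul]

theorem sum_sin_pow_div_sin_pow_eq (a b : ℕ) {k : ℕ} (hk : Odd k) :
    (b : ℂ) ^ a + 2 * ∑ n ∈ Icc 1 ((k - 1) / 2),
        ((Real.sin (2 * π * b * n / k) ^ a / Real.sin (2 * π * n / k) ^ a : ℝ) : ℂ) =
      k * ∑ c ∈ (range (a * (b - 1) + 1)).filter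
        (fun c : ℕ => (k : ℤ) ∣ 2 * c - (a * (b - 1) : ℕ)), (geomPoly ℂ b ^ a).coeff c := by
  have hζ := Complex.isPrimitiveRoot_exp k hk.pos.ne'
  have hsplit := sum_Ico_one_eq_two_nsmul_sum_Icc_of_odd
    (fun n => ((Real.sin (2 * π * b * n / k) ^ a / Real.sin (2 * π * n / k) ^ a : ℝ) : ℂ))
    hk fun n hn => by simp only [sin_pow_div_sin_pow_reflect a b hk.pos.ne' hn]
  rw [nsmul_eq_mul, Nat.cast_ofNat] at hsplit
  rw [← hζ.sum_sinRatio_pow, range_eq_Ico, sum_eq_sum_Ico_succ_bot hk.pos, ← hsplit]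
  congr 1
  · simp [sinRatio, eval_geomPoly]
  refine sum_congr rfl fun n hn => ?_
  have hn := mem_Ico.1 hn
  have hexp : Complex.exp ((2 * π * n / k : ℝ) * Complex.I)
      = Complex.exp (2 * π * Complex.I / k) ^ n := by
    rw [← Complex.exp_nat_mul]; push_cast; ring_nf
  rw [show 2 * π * b * n / k = b * (2 * π * n / k) by ring, Complex.sin_pow_div_sin_pow_eq a b
    (Real.sin_two_pi_mul_div_ne_zero hk hn.1 hn.2), hexp]

theorem sum_range_filter_eq_of_symm {M : Type*} [AddCommMonoid M] {d : ℕ} (p : ℕ → Prop)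
    [DecidablePred p] (N : ℕ → M) (hp : ∀ c ≤ d, p (d - c) ↔ p c)
    (hN : ∀ c ≤ d, N (d - c) = N c) :
    ∑ c ∈ range (d + 1) with p c, N c =
      ∑ c ∈ range (d + 1) with p c ∧ 2 * c = d, N c +
        2 • ∑ c ∈ range (d + 1) with p c ∧ 2 * c < d, N c := by
  simp only [sum_filter]
  have hreflect : ∑ c ∈ range (d + 1), (if p c ∧ d < 2 * c then N c else 0) =
      ∑ c ∈ range (d + 1), if p c ∧ 2 * c < d then N c else 0 := by
    rw [← sum_range_reflect]
    refine sum_congr rfl fun c hc => ?_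
    have hc : c ≤ d := Nat.lt_succ_iff.1 (mem_range.1 hc)
    rw [Nat.add_sub_cancel, hN c hc]
    exact if_congr (and_congr (hp c hc) (by omega)) rfl rfl
  rw [two_nsmul, ← add_assoc, ← sum_add_distrib, ← hreflect, ← sum_add_distrib]
  refine sum_congr rfl fun c _ => ?_
  rcases lt_trichotomy (2 * c) d with h | h | h
  · simp [h, h.ne, h.not_gt]
  · simp [h]
  · simp [h, h.ne', h.not_gt]

theorem sum_filter_product_Icc_eq {α β M : Type*} [AddCommMonoid M] (s : Finset α)
    (s' : Finset β) (f : α → β → ℕ) (g : α → β → M) {d k R : ℕ} (hk : 0 < k)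
    (hdR : d ≤ R) :
    ∑ t ∈ s ×ˢ s' ×ˢ Icc 1 R with 2 * f t.1 t.2.1 + t.2.2 * k = d, g t.1 t.2.1 =
      ∑ t ∈ s ×ˢ s' with 2 * f t.1 t.2 < d ∧ k ∣ d - 2 * f t.1 t.2, g t.1 t.2 := by
  refine sum_nbij' (fun t => (t.1, t.2.1)) (fun t => (t.1, t.2, (d - 2 * f t.1 t.2) / k))
    ?_ ?_ ?_ ?_ fun _ _ => rfl
  · rintro ⟨x, y, r⟩ ht
    simp only [mem_filter, mem_product, mem_Icc] at ht ⊢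
    obtain ⟨⟨hx, hy, hr, -⟩, hd⟩ := ht
    have : 1 ≤ r * k := Nat.one_le_iff_ne_zero.2 (by positivity)
    exact ⟨⟨hx, hy⟩, by omega, Dvd.intro_left r (by omega)⟩
  · rintro ⟨x, y⟩ ht
    simp only [mem_filter, mem_product, mem_Icc] at ht ⊢
    obtain ⟨⟨hx, hy⟩, hlt, hdvd⟩ := ht
    have hmul := Nat.div_mul_cancel hdvd
    refine ⟨⟨hx, hy, Nat.div_pos (Nat.le_of_dvd (by omega) hdvd) hk, ?_⟩, by omega⟩
    exact (Nat.div_le_self _ _).trans (by omega)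
  · rintro ⟨x, y, r⟩ ht
    simp only [mem_filter, mem_product, mem_Icc] at ht
    simp only [Prod.mk.injEq, true_and]
    rw [show d - 2 * f x y = r * k by omega, Nat.mul_div_cancel _ hk]
  · intro t _
    rfl

theorem sum_coeff_geomPoly_pow_eq {R : Type*} [CommRing R] {a : ℕ} (ha : 0 < a) (b : ℕ)
    {L : ℕ} (haL : a < L) {S : Finset ℕ} (hS : ∀ c ∈ S, c < L) :
    ∑ c ∈ S, (geomPoly R b ^ a).coeff c =
      ∑ t ∈ range L ×ˢ range L with b * t.2 + t.1 ∈ S,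
        (-1) ^ t.2 * (a.choose t.2 : R) * ((a - 1 + t.1).choose t.1 : R) := by
  rw [← sum_fiberwise_eq_sum_filter]
  exact sum_congr rfl fun c hc => coeff_geomPoly_pow ha b haL (hS c hc)

theorem Sab_eq_sum_coeff_geomPoly_pow {k a b : ℕ} (ha : 0 < a) (hb : 0 < b) (hk : 0 < k) :
    (Sab k a b : ℂ) = ∑ c ∈ (range (a * (b - 1) + 1)).filter
      (fun c : ℕ => (k : ℤ) ∣ 2 * c - (a * (b - 1) : ℕ)), (geomPoly ℂ b ^ a).coeff c := by
  have hd : a * b - a = a * (b - 1) := (Nat.mul_sub_one a b).symm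
  have haL : a < a * b + 1 := Nat.lt_succ_of_le (Nat.le_mul_of_pos_right a hb)
  have hrange : ∀ (p : ℕ → Prop) [DecidablePred p],
      ∀ c ∈ (range (a * (b - 1) + 1)).filter p, c < a * b + 1 :=
    fun p _ c hc => by simp only [mem_filter, mem_range] at hc; omega
  rw [sum_range_filter_eq_of_symm _ _ (fun c hc => ?_) fun c hc => coeff_geomPoly_pow_sub a b hc,
    sum_coeff_geomPoly_pow_eq ha b haL (hrange _), sum_coeff_geomPoly_pow_eq ha b haL (hrange _)]
  · unfold Sab
    push_cast
    rw [nsmul_eq_mul, Nat.cast_ofNat]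
    congr 1
    · refine sum_congr (filter_congr fun t _ => ?_) fun _ _ => rfl
      rw [mul_assoc, ← mul_add, hd, mem_filter, mem_range, ← Nat.cast_mul]
      generalize b * t.2 + t.1 = c, a * (b - 1) = d
      refine ⟨fun h => ⟨by omega, ?_, h⟩, fun h => h.2.2⟩
      rw [show 2 * (c : ℤ) - d = 0 by omega]
      exact dvd_zero _
    · congr 1
      rw [filter_congr fun t _ => by rw [mul_assoc, ← mul_add, hd], sum_filter_product_Icc_eq
        (f := fun m n => b * n + m) (g := fun m n => (-1 : ℂ) ^ n * (a.choose n : ℂ) *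
          ((a - 1 + m).choose m : ℂ)) _ _ hk (by omega : a * (b - 1) ≤ a * b)]
      refine sum_congr (filter_congr fun t _ => ?_) fun _ _ => rfl
      rw [mem_filter, mem_range, ← Nat.cast_mul]
      generalize b * t.2 + t.1 = c, a * (b - 1) = d
      have hdvd_iff : 2 * c < d → ((k : ℤ) ∣ 2 * c - d ↔ k ∣ d - 2 * c) := fun h => by
        rw [dvd_sub_comm, ← Nat.cast_ofNat, ← Nat.cast_mul, ← Nat.cast_sub h.le,
          Int.natCast_dvd_natCast]
      exact ⟨fun ⟨hlt, hdvd⟩ => ⟨by omega, (hdvd_iff hlt).2 hdvd, hlt⟩,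
        fun ⟨_, hdvd, hlt⟩ => ⟨hlt, (hdvd_iff hlt).1 hdvd⟩⟩
  · rw [Nat.cast_sub hc, show 2 * ((a * (b - 1) : ℕ) - c : ℤ) - (a * (b - 1) : ℕ) =
      -(2 * c - (a * (b - 1) : ℕ)) by ring, dvd_neg]

theorem stmt_18 (a b k : ℕ) (ha : 0 < a) (hb : 1 < b) (hk : 0 < k)
    (hkodd : Odd k) :
    ∑ n ∈ Finset.Icc 1 ((k - 1) / 2),
        Real.sin (2 * Real.pi * b * n / k) ^ a /
          Real.sin (2 * Real.pi * n / k) ^ a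
      = -(b : ℝ) ^ a / 2 + (k : ℝ) / 2 * Sab k a b := by
  have hsum := sum_sin_pow_div_sin_pow_eq a b hkodd
  rw [← Sab_eq_sum_coeff_geomPoly_pow ha (by omega) hk] at hsum
  apply Complex.ofReal_injective
  push_cast at hsum ⊢
  linear_combination hsum / 2
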